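/- arXiv:2601.15455 — 4 statements merged into one kernel-verified Lean document; each statement's English description precedes it below -/
import Mathlib

section
/- The program λ̂f. Λα:type. λx:α. f x is not typable in the declarative type system: there is no environment Γ, type τ, and effect ε with Γ ⊢ λ̂f. Λα:type. λx:α. f x : τ ! ε, when the initial environment does not bind α. Intuitively, the argument type of f would have to mention the ∀-bound variable α, but the unannotated lambda is typed before α enters scope, so the required monomorphic type for f cannot be well-kinded in the outer environment. -/
/-- Kinds: the kind of effects and the kind of types. -/
inductive Kind : Type
| effect
| type

/-- Effects. -/
inductive Eff : Type
| tvar (a : ℕ)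
| uvar (x : ℕ)
| pure
| join (e₁ e₂ : Eff)

/-- Types (with a base type Int). -/
inductive Ty : Type
| tvar (a : ℕ)
| uvar (x : ℕ)
| int
| arrow (t₁ : Ty) (e : Eff) (t₂ : Ty)
| all (a : ℕ) (k : Kind) (t : Ty)

/-- Descriptors: types or effects. -/
inductive Desc : Type
| ty (t : Ty)
| eff (e : Eff)

/-- Expressions. -/
inductive Expr : Type
| var (x : ℕ)
| lit (n : ℤ)
| lam (x : ℕ) (t : Ty) (e : Expr)
| lamU (x : ℕ) (e : Expr)
| app (e₁ e₂ : Expr)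
| lamD (a : ℕ) (k : Kind) (e : Expr)
| appD (e : Expr) (d : Desc)
| elet (x : ℕ) (e₁ e₂ : Expr)

/-- Environment entries: kind assignments and term-variable type assignments. -/
inductive Entry : Type
| kind (a : ℕ) (k : Kind)
| var (x : ℕ) (t : Ty)

abbrev Env := List Entry

def lookupVar : Env → ℕ → Option Ty
| [], _ => none
| Entry.var y t :: Γ, x => if x = y then some t else lookupVar Γ x
| Entry.kind _ _ :: Γ, x => lookupVar Γ x

def lookupKind : Env → ℕ → Option Kind
| [], _ => none
| Entry.kind b k :: Γ, a => if a = b then some k else lookupKind Γ a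
| Entry.var _ _ :: Γ, a => lookupKind Γ a

/-- Domain of kind assignments of an environment. -/
def Env.kdom : Env → Finset ℕ
| [] => ∅
| Entry.kind a _ :: Γ => insert a (Env.kdom Γ)
| Entry.var _ _ :: Γ => Env.kdom Γ

/-- Free type variables of an effect. -/
def Eff.fv : Eff → Finset ℕ
| .tvar a => {a}
| .uvar _ => ∅
| .pure => ∅
| .join e₁ e₂ => e₁.fv ∪ e₂.fv

/-- Free unification variables of an effect. -/
def Eff.fuv : Eff → Finset ℕ
| .tvar _ => ∅
| .uvar x => {x}
| .pure => ∅
| .join e₁ e₂ => e₁.fuv ∪ e₂.fuv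

/-- Free type variables of a type. -/
def Ty.fv : Ty → Finset ℕ
| .tvar a => {a}
| .uvar _ => ∅
| .int => ∅
| .arrow t₁ e t₂ => t₁.fv ∪ e.fv ∪ t₂.fv
| .all a _ t => t.fv.erase a

/-- Free unification variables of a type (including those in effect annotations). -/
def Ty.fuv : Ty → Finset ℕ
| .tvar _ => ∅
| .uvar x => {x}
| .int => ∅
| .arrow t₁ e t₂ => t₁.fuv ∪ e.fuv ∪ t₂.fuv
| .all _ _ t => t.fuv

/-- Bound type variables of a type, as a list of binder occurrences. -/
def Ty.bv : Ty → List ℕ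
| .tvar _ => []
| .uvar _ => []
| .int => []
| .arrow t₁ _ t₂ => t₁.bv ++ t₂.bv
| .all a _ t => a :: t.bv

def Desc.fv : Desc → Finset ℕ
| .ty t => t.fv
| .eff e => e.fv

def Desc.fuv : Desc → Finset ℕ
| .ty t => t.fuv
| .eff e => e.fuv

def Desc.bv : Desc → List ℕ
| .ty t => t.bv
| .eff _ => []

/-- Bound type variables (binder occurrences) of an expression, including binders
occurring in type annotations and descriptors. -/
def Expr.bv : Expr → List ℕ
| .var _ => []
| .lit _ => []
| .lam _ t e => t.bv ++ e.bv
| .lamU _ e => e.bv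
| .app e₁ e₂ => e₁.bv ++ e₂.bv
| .lamD a _ e => a :: e.bv
| .appD e d => e.bv ++ d.bv
| .elet _ e₁ e₂ => e₁.bv ++ e₂.bv

/-- Bound type variables occurring in the types assigned by an environment. -/
def Env.bv : Env → List ℕ
| [] => []
| Entry.kind _ _ :: Γ => Env.bv Γ
| Entry.var _ t :: Γ => t.bv ++ Env.bv Γ

/-- Free unification variables of an environment. -/
def Env.fuv : Env → Finset ℕ
| [] => ∅
| Entry.kind _ _ :: Γ => Env.fuv Γ
| Entry.var _ t :: Γ => t.fuv ∪ Env.fuv Γ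

/-- Capturing substitution of a descriptor for a type variable, in effects. -/
def Eff.substC (a : ℕ) (d : Desc) : Eff → Eff
| .tvar b => if b = a then (match d with | .eff e => e | .ty _ => .tvar b) else .tvar b
| .uvar x => .uvar x
| .pure => .pure
| .join e₁ e₂ => .join (e₁.substC a d) (e₂.substC a d)

/-- Capturing substitution of a descriptor for a type variable, in types:
free occurrences of the variable are replaced literally, no binder is renamed. -/
def Ty.substC (a : ℕ) (d : Desc) : Ty → Ty
| .tvar b => if b = a then (match d with | .ty t => t | .eff _ => .tvar b) else .tvar b
| .uvar x => .uvar x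
| .int => .int
| .arrow t₁ e t₂ => .arrow (t₁.substC a d) (e.substC a d) (t₂.substC a d)
| .all b k t => if b = a then .all b k t else .all b k (t.substC a d)

/-- Capturing renaming of a type variable in effects. -/
def Eff.ren (a b : ℕ) : Eff → Eff := Eff.substC a (.eff (.tvar b))

/-- Capturing renaming of a type variable in types. -/
def Ty.ren (a b : ℕ) : Ty → Ty
| .tvar c => if c = a then .tvar b else .tvar c
| .uvar x => .uvar x
| .int => .int
| .arrow t₁ e t₂ => .arrow (t₁.ren a b) (e.ren a b) (t₂.ren a b)
| .all c k t => if c = a then .all c k t else .all c k (t.ren a b)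

/-- Capturing substitution of a descriptor for a unification variable, in effects. -/
def Eff.substU (x : ℕ) (d : Desc) : Eff → Eff
| .tvar a => .tvar a
| .uvar y => if y = x then (match d with | .eff e => e | .ty _ => .uvar y) else .uvar y
| .pure => .pure
| .join e₁ e₂ => .join (e₁.substU x d) (e₂.substU x d)

/-- Capturing substitution of a descriptor for a unification variable, in types:
no binder is renamed, so bound variables may capture free variables of the
substituted descriptor. -/
def Ty.substU (x : ℕ) (d : Desc) : Ty → Ty
| .tvar a => .tvar a
| .uvar y => if y = x then (match d with | .ty t => t | .eff _ => .uvar y) else .uvar y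
| .int => .int
| .arrow t₁ e t₂ => .arrow (t₁.substU x d) (e.substU x d) (t₂.substU x d)
| .all a k t => .all a k (t.substU x d)

/-- Substitutions mapping unification variables to descriptors. -/
abbrev Subst := ℕ → Option Desc

def idSubst : Subst := fun _ => none

def Subst.single (x : ℕ) (d : Desc) : Subst := fun y => if y = x then some d else none

def Eff.applyS (θ : Subst) : Eff → Eff
| .tvar a => .tvar a
| .uvar x => match θ x with | some (.eff e) => e | _ => .uvar x
| .pure => .pure
| .join e₁ e₂ => .join (e₁.applyS θ) (e₂.applyS θ)

def Ty.applyS (θ : Subst) : Ty → Ty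
| .tvar a => .tvar a
| .uvar x => match θ x with | some (.ty t) => t | _ => .uvar x
| .int => .int
| .arrow t₁ e t₂ => .arrow (t₁.applyS θ) (e.applyS θ) (t₂.applyS θ)
| .all a k t => .all a k (t.applyS θ)

def Desc.applyS (θ : Subst) : Desc → Desc
| .ty t => .ty (t.applyS θ)
| .eff e => .eff (e.applyS θ)

def Subst.comp (θ₂ θ₁ : Subst) : Subst :=
  fun x => match θ₁ x with
  | some d => some (d.applyS θ₂)
  | none => θ₂ x

def Env.applyS (θ : Subst) : Env → Env :=
  List.map (fun en => match en with
    | Entry.kind a k => Entry.kind a k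
    | Entry.var x t => Entry.var x (t.applyS θ))

/-- Effect equivalence: least congruence containing the laws of an idempotent
commutative monoid with identity ∅ and operation ∪. -/
inductive EffEquiv : Eff → Eff → Prop
| refl (e) : EffEquiv e e
| symm {e₁ e₂} : EffEquiv e₁ e₂ → EffEquiv e₂ e₁
| trans {e₁ e₂ e₃} : EffEquiv e₁ e₂ → EffEquiv e₂ e₃ → EffEquiv e₁ e₃
| congr {e₁ e₁' e₂ e₂'} : EffEquiv e₁ e₁' → EffEquiv e₂ e₂' →
    EffEquiv (.join e₁ e₂) (.join e₁' e₂')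
| assoc (e₁ e₂ e₃) : EffEquiv (.join (.join e₁ e₂) e₃) (.join e₁ (.join e₂ e₃))
| comm (e₁ e₂) : EffEquiv (.join e₁ e₂) (.join e₂ e₁)
| idem (e) : EffEquiv (.join e e) e
| pureId (e) : EffEquiv (.join .pure e) e

/-- Type equivalence (α-equivalence): least congruence respecting effect
equivalence in arrows and allowing renaming of ∀-bound variables. -/
inductive TyEquiv : Ty → Ty → Prop
| refl (t) : TyEquiv t t
| symm {t₁ t₂} : TyEquiv t₁ t₂ → TyEquiv t₂ t₁
| trans {t₁ t₂ t₃} : TyEquiv t₁ t₂ → TyEquiv t₂ t₃ → TyEquiv t₁ t₃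
| arrow {t₁ t₁' t₂ t₂' e e'} : TyEquiv t₁ t₁' → EffEquiv e e' → TyEquiv t₂ t₂' →
    TyEquiv (.arrow t₁ e t₂) (.arrow t₁' e' t₂')
| all {t t'} (a : ℕ) (k : Kind) : TyEquiv t t' → TyEquiv (.all a k t) (.all a k t')
| alpha {t : Ty} (a b : ℕ) (k : Kind) : b ∉ t.fv → b ∉ t.bv →
    TyEquiv (.all a k t) (.all b k (t.ren a b))

/-- Monomorphic types. -/
inductive Mono : Ty → Prop
| tvar (a : ℕ) : Mono (.tvar a)
| uvar (x : ℕ) : Mono (.uvar x)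
| int : Mono .int
| arrow {t₁ t₂ : Ty} (e : Eff) : Mono t₁ → Mono t₂ → Mono (.arrow t₁ e t₂)

/-- Kinding judgment Γ ⊢ δ : κ. -/
inductive Kinding : Env → Desc → Kind → Prop
| varTy {Γ a} : lookupKind Γ a = some .type → Kinding Γ (.ty (.tvar a)) .type
| varEff {Γ a} : lookupKind Γ a = some .effect → Kinding Γ (.eff (.tvar a)) .effect
| int {Γ} : Kinding Γ (.ty .int) .type
| arrow {Γ t₁ t₂ e} : Kinding Γ (.ty t₁) .type → Kinding Γ (.ty t₂) .type →
    Kinding Γ (.eff e) .effect → Kinding Γ (.ty (.arrow t₁ e t₂)) .type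
| all {Γ a k t} : Kinding (Entry.kind a k :: Γ) (.ty t) .type →
    Kinding Γ (.ty (.all a k t)) .type
| pure {Γ} : Kinding Γ (.eff .pure) .effect
| join {Γ e₁ e₂} : Kinding Γ (.eff e₁) .effect → Kinding Γ (.eff e₂) .effect →
    Kinding Γ (.eff (.join e₁ e₂)) .effect

def Desc.tyOr (d : Desc) (t : Ty) : Ty :=
  match d with
  | .ty t' => t'
  | .eff _ => t

/-- Capture-avoiding substitution of a descriptor for a type variable, as a
relation: {a ↦ d} τ = τ', with binders renamed as needed to avoid capture. -/
inductive SubstCA (a : ℕ) (d : Desc) : Ty → Ty → Prop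
| tvar_eq : SubstCA a d (.tvar a) (d.tyOr (.tvar a))
| tvar_ne {b} : b ≠ a → SubstCA a d (.tvar b) (.tvar b)
| uvar (x) : SubstCA a d (.uvar x) (.uvar x)
| int : SubstCA a d .int .int
| arrow {t₁ t₁' t₂ t₂' e} : SubstCA a d t₁ t₁' → SubstCA a d t₂ t₂' →
    SubstCA a d (.arrow t₁ e t₂) (.arrow t₁' (e.substC a d) t₂')
| all_eq {k t} : SubstCA a d (.all a k t) (.all a k t)
| all_ne {b k t t'} : b ≠ a → b ∉ d.fv → SubstCA a d t t' →
    SubstCA a d (.all b k t) (.all b k t')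
| all_ren {b c k t t'} : b ≠ a → c ≠ a → c ∉ d.fv → c ∉ t.fv → c ∉ t.bv →
    SubstCA a d (t.ren b c) t' → SubstCA a d (.all b k t) (.all c k t')

/-- The declarative type system (with the restored well-formedness premises),
including the rules for unannotated lambdas, integer literals and let-bindings. -/
inductive Typing : Env → Expr → Ty → Eff → Prop
| var {Γ x τ} : lookupVar Γ x = some τ → Typing Γ (.var x) τ .pure
| lit {Γ n} : Typing Γ (.lit n) .int .pure
| lam {Γ x τ₁ τ₂ e ε} : Kinding Γ (.ty τ₁) .type →
    Typing (Entry.var x τ₁ :: Γ) e τ₂ ε →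
    Typing Γ (.lam x τ₁ e) (.arrow τ₁ ε τ₂) .pure
| lamU {Γ x τ₁ τ₂ e ε} : Kinding Γ (.ty τ₁) .type → Mono τ₁ →
    Typing (Entry.var x τ₁ :: Γ) e τ₂ ε →
    Typing Γ (.lamU x e) (.arrow τ₁ ε τ₂) .pure
| app {Γ e₁ e₂ τ₁ τ₂ ε ε₁ ε₂} : Typing Γ e₁ (.arrow τ₂ ε τ₁) ε₁ →
    Typing Γ e₂ τ₂ ε₂ →
    Typing Γ (.app e₁ e₂) τ₁ (.join ε₁ (.join ε₂ ε))
| lamD {Γ a k e τ} : Typing (Entry.kind a k :: Γ) e τ .pure →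
    Typing Γ (.lamD a k e) (.all a k τ) .pure
| appD {Γ e a k τ τ' δ ε} : Typing Γ e (.all a k τ) ε → Kinding Γ δ k →
    SubstCA a δ τ τ' → Typing Γ (.appD e δ) τ' ε
| elet {Γ x e₁ e₂ τ₁ τ₂ ε₁ ε₂} : Typing Γ e₁ τ₁ ε₁ →
    Typing (Entry.var x τ₁ :: Γ) e₂ τ₂ ε₂ →
    Typing Γ (.elet x e₁ e₂) τ₂ (.join ε₁ ε₂)
| conv {Γ e τ₁ τ₂ ε₁ ε₂} : Typing Γ e τ₁ ε₁ → TyEquiv τ₁ τ₂ → EffEquiv ε₁ ε₂ →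
    Typing Γ e τ₂ ε₂

/-- The simplified declarative type system: the system of the figure without
the rule T-LamU (and without let-bindings). -/
inductive TypingND : Env → Expr → Ty → Eff → Prop
| var {Γ x τ} : lookupVar Γ x = some τ → TypingND Γ (.var x) τ .pure
| lit {Γ n} : TypingND Γ (.lit n) .int .pure
| lam {Γ x τ₁ τ₂ e ε} : Kinding Γ (.ty τ₁) .type →
    TypingND (Entry.var x τ₁ :: Γ) e τ₂ ε →
    TypingND Γ (.lam x τ₁ e) (.arrow τ₁ ε τ₂) .pure
| app {Γ e₁ e₂ τ₁ τ₂ ε ε₁ ε₂} : TypingND Γ e₁ (.arrow τ₂ ε τ₁) ε₁ →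
    TypingND Γ e₂ τ₂ ε₂ →
    TypingND Γ (.app e₁ e₂) τ₁ (.join ε₁ (.join ε₂ ε))
| lamD {Γ a k e τ} : TypingND (Entry.kind a k :: Γ) e τ .pure →
    TypingND Γ (.lamD a k e) (.all a k τ) .pure
| appD {Γ e a k τ τ' δ ε} : TypingND Γ e (.all a k τ) ε → Kinding Γ δ k →
    SubstCA a δ τ τ' → TypingND Γ (.appD e δ) τ' ε
| conv {Γ e τ₁ τ₂ ε₁ ε₂} : TypingND Γ e τ₁ ε₁ → TyEquiv τ₁ τ₂ → EffEquiv ε₁ ε₂ →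
    TypingND Γ e τ₂ ε₂

/-- τ has locally unique bound variables w.r.t. a domain of variables:
no binder in τ shadows another binder of τ, and no binder is in the domain. -/
def luTy (dom : Finset ℕ) : Ty → Prop
| .tvar _ => True
| .uvar _ => True
| .int => True
| .arrow t₁ _ t₂ => luTy dom t₁ ∧ luTy dom t₂
| .all a _ t => a ∉ dom ∧ luTy (insert a dom) t

def luDesc (dom : Finset ℕ) : Desc → Prop
| .ty t => luTy dom t
| .eff _ => True

/-- An environment has locally unique bound variables w.r.t. itself. -/
def luEnv (Γ : Env) : Prop := ∀ x τ, Entry.var x τ ∈ Γ → luTy Γ.kdom τ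

/-- e has globally unique bound variables w.r.t. a domain: every binder occurs
at most once in e and no binder is in the domain. -/
def guExpr (dom : Finset ℕ) (e : Expr) : Prop :=
  e.bv.Nodup ∧ ∀ a ∈ e.bv, a ∉ dom

/-- The simple type inference algorithm (for the calculus without unannotated
lambdas), using capturing substitution in the type application case. -/
inductive SInfer : Env → Expr → Ty → Eff → Prop
| var {Γ x τ} : lookupVar Γ x = some τ → SInfer Γ (.var x) τ .pure
| lit {Γ n} : SInfer Γ (.lit n) .int .pure
| lam {Γ x τ τ' e ε} : Kinding Γ (.ty τ) .type →
    SInfer (Entry.var x τ :: Γ) e τ' ε →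
    SInfer Γ (.lam x τ e) (.arrow τ ε τ') .pure
| app {Γ e₁ e₂ τa τ₁ τ₂ ε ε₁ ε₂} : SInfer Γ e₁ (.arrow τa ε τ₁) ε₁ →
    SInfer Γ e₂ τ₂ ε₂ → TyEquiv τa τ₂ →
    SInfer Γ (.app e₁ e₂) τ₁ (.join ε₁ (.join ε₂ ε))
| lamD {Γ a k e τ ε} : SInfer (Entry.kind a k :: Γ) e τ ε → EffEquiv ε .pure →
    SInfer Γ (.lamD a k e) (.all a k τ) .pure
| appD {Γ e a k τ δ ε} : SInfer Γ e (.all a k τ) ε → Kinding Γ δ k →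
    SInfer Γ (.appD e δ) (τ.substC a δ) ε

/-- The algebraic unification algorithm, as a relation. In the ∀-case a fresh
variable is chosen and both bound variables are renamed to it (capturing
renaming). Effect unification is delayed into constraints. -/
inductive Unify : Ty → Ty → Subst → List (Eff × Eff) → Prop
| tvar (a) : Unify (.tvar a) (.tvar a) idSubst []
| int : Unify .int .int idSubst []
| uvarRefl (x) : Unify (.uvar x) (.uvar x) idSubst []
| uvarL {x τ} : x ∉ τ.fuv → Mono τ → Unify (.uvar x) τ (Subst.single x (.ty τ)) []
| uvarR {x τ} : x ∉ τ.fuv → Mono τ → Unify τ (.uvar x) (Subst.single x (.ty τ)) []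
| arrow {t₁ t₂ t₁' t₂' e₁ e₂ θ₁ θ₂ C₁ C₂} :
    Unify t₁ t₂ θ₁ C₁ →
    Unify (t₁'.applyS θ₁) (t₂'.applyS θ₁) θ₂ C₂ →
    Unify (.arrow t₁ e₁ t₁') (.arrow t₂ e₂ t₂') (θ₂.comp θ₁)
      (C₁ ++ C₂ ++ [(e₁, e₂)])
| all {a₁ a₂ b k t₁ t₂ θ C} :
    b ∉ t₁.fv ∪ t₂.fv → b ∉ t₁.bv → b ∉ t₂.bv →
    Unify (t₁.ren a₁ b) (t₂.ren a₂ b) θ C →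
    Unify (.all a₁ k t₁) (.all a₂ k t₂) θ C

/-- Models: partial maps from effect unification variables to effects. -/
abbrev EModel := ℕ → Option Eff

/-- The identity substitution, as a model. -/
def idModel : EModel := fun _ => none

def Eff.applyM (μ : EModel) : Eff → Eff
| .tvar a => .tvar a
| .uvar x => (μ x).getD (.uvar x)
| .pure => .pure
| .join e₁ e₂ => .join (e₁.applyM μ) (e₂.applyM μ)

def Ty.applyM (μ : EModel) : Ty → Ty
| .tvar a => .tvar a
| .uvar x => .uvar x
| .int => .int
| .arrow t₁ e t₂ => .arrow (t₁.applyM μ) (e.applyM μ) (t₂.applyM μ)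
| .all a k t => .all a k (t.applyM μ)

/-- A model maps (effect) unification variables to ground effects. -/
def IsModel (μ : EModel) : Prop := ∀ x e, μ x = some e → Eff.fuv e = ∅

/-- μ ⊨ C : the model equates both sides of every constraint up to
effect equivalence. -/
def Models (μ : EModel) (C : List (Eff × Eff)) : Prop :=
  ∀ p ∈ C, EffEquiv (Eff.applyM μ p.1) (Eff.applyM μ p.2)

/-- Atomic identifiers (type variables and unification variables) of an effect. -/
def Eff.ids : Eff → Finset (ℕ ⊕ ℕ)
| .tvar a => {Sum.inl a}
| .uvar x => {Sum.inr x}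
| .pure => ∅
| .join e₁ e₂ => e₁.ids ∪ e₂.ids

/-- Free identifiers (type variables and unification variables) of a type. -/
def Ty.ids : Ty → Finset (ℕ ⊕ ℕ)
| .tvar a => {Sum.inl a}
| .uvar x => {Sum.inr x}
| .int => ∅
| .arrow t₁ e t₂ => t₁.ids ∪ e.ids ∪ t₂.ids
| .all a _ t => t.ids \ {Sum.inl a}

def constrIds (C : List (Eff × Eff)) : Finset (ℕ ⊕ ℕ) :=
  C.foldr (fun p s => p.1.ids ∪ p.2.ids ∪ s) ∅

/-- Free identifiers of an environment (domain of kind assignments and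
identifiers of assigned types). -/
def Env.ids : Env → Finset (ℕ ⊕ ℕ)
| [] => ∅
| Entry.kind a _ :: Γ => insert (Sum.inl a) (Env.ids Γ)
| Entry.var _ t :: Γ => t.ids ∪ Env.ids Γ

/-- Map identifiers of an effect through a function. -/
def Eff.mapIds (g : ℕ ⊕ ℕ → Eff) : Eff → Eff
| .tvar a => g (Sum.inl a)
| .uvar x => g (Sum.inr x)
| .pure => .pure
| .join e₁ e₂ => .join (e₁.mapIds g) (e₂.mapIds g)

/-- The Jouvelot–Gifford type-and-effect reconstruction algorithm, as a
relation R(Γ, e) = (τ, ε, θ, C); freshness of generated variables is expressed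
relative to the data available at the corresponding point. -/
inductive RInfer : Env → Expr → Ty → Eff → Subst → List (Eff × Eff) → Prop
| var {Γ x τ} : lookupVar Γ x = some τ → RInfer Γ (.var x) τ .pure idSubst []
| lit {Γ n} : RInfer Γ (.lit n) .int .pure idSubst []
| lam {Γ x τ τ' e ε θ C} : Kinding Γ (.ty τ) .type →
    RInfer (Entry.var x τ :: Γ) e τ' ε θ C →
    RInfer Γ (.lam x τ e) (.arrow τ ε τ') .pure θ C
| lamU {Γ x z e τ ε θ C} :
    Sum.inr z ∉ Env.ids Γ →
    RInfer (Entry.var x (.uvar z) :: Γ) e τ ε θ C →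
    RInfer Γ (.lamU x e) (.arrow (Ty.applyS θ (.uvar z)) ε τ) .pure θ C
| app {Γ e₁ e₂ τ₁ τ₂ ε₁ ε₂ θ₁ θ₂ θ₃ C₁ C₂ C₃ xt xe} :
    RInfer Γ e₁ τ₁ ε₁ θ₁ C₁ →
    RInfer (Env.applyS θ₁ Γ) e₂ τ₂ ε₂ θ₂ C₂ →
    xt ≠ xe →
    Sum.inr xt ∉ Env.ids Γ ∪ τ₁.ids ∪ τ₂.ids ∪ ε₁.ids ∪ ε₂.ids ∪ constrIds C₁ ∪ constrIds C₂ →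
    Sum.inr xe ∉ Env.ids Γ ∪ τ₁.ids ∪ τ₂.ids ∪ ε₁.ids ∪ ε₂.ids ∪ constrIds C₁ ∪ constrIds C₂ →
    Unify (τ₁.applyS θ₂) (.arrow τ₂ (.uvar xe) (.uvar xt)) θ₃ C₃ →
    RInfer Γ (.app e₁ e₂) (Ty.applyS θ₃ (.uvar xt))
      (.join ε₁ (.join ε₂ (.uvar xe))) ((θ₃.comp θ₂).comp θ₁) (C₁ ++ C₂ ++ C₃)
| lamD {Γ a k e τ ε θ C C' b} {f : ℕ ⊕ ℕ → ℕ} {g : ℕ ⊕ ℕ → Eff} :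
    RInfer (Entry.kind a k :: Γ) e τ ε θ C →
    C' = (ε, Eff.pure) :: C →
    Sum.inl b ∉ constrIds C' ∪ Env.ids (Env.applyS θ (Entry.kind a k :: Γ)) ∪ τ.ids →
    (∀ i ∈ constrIds C' \ Env.ids (Env.applyS θ (Entry.kind a k :: Γ)),
      Sum.inr (f i) ∉ constrIds C' ∪ Env.ids (Env.applyS θ (Entry.kind a k :: Γ)) ∪ τ.ids) →
    Set.InjOn f ↑(constrIds C' \ Env.ids (Env.applyS θ (Entry.kind a k :: Γ))) →
    g = (fun i => if i = Sum.inl a then Eff.tvar b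
      else if i ∈ constrIds C' \ Env.ids (Env.applyS θ (Entry.kind a k :: Γ))
        then Eff.uvar (f i)
        else match i with | Sum.inl t => Eff.tvar t | Sum.inr u => Eff.uvar u) →
    RInfer Γ (.lamD a k e) (.all a k τ) .pure θ
      ((C'.map (fun p => (Eff.mapIds g p.1, Eff.mapIds g p.2))) ++ C')
| appD {Γ e a k τ ε θ C δ} :
    RInfer Γ e (.all a k τ) ε θ C →
    Kinding Γ δ k →
    RInfer Γ (.appD e δ) (τ.substC a δ) ε θ
      (C.map (fun p => (p.1.substC a δ, p.2.substC a δ)))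

/-- ∀-free types. -/
def noForall : Ty → Prop
| .all _ _ _ => False
| .arrow t₁ _ t₂ => noForall t₁ ∧ noForall t₂
| _ => True

/-! The abstraction λ̂f is typed before α enters scope, so the kinding premise of T-LamU
forces every free type variable of f's type to be bound in Γ. Inside the body, the
application `f x` with `x : α` makes α free in f's type, because free type variables are
invariant under α-equivalence and effect equivalence, the only conversions the system
allows. -/

theorem Eff.fv_ren_erase (a b : ℕ) (e : Eff) :
    (e.ren a b).fv.erase b = (e.fv.erase a).erase b := by
  induction e with
  | tvar c =>
    by_cases hc : c = a
    · subst hc; simp [Eff.ren, Eff.substC, Eff.fv]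
    · simp [Eff.ren, Eff.substC, Eff.fv, hc,
        Finset.erase_eq_of_notMem (Finset.notMem_singleton.2 (Ne.symm hc))]
  | uvar => simp [Eff.ren, Eff.substC, Eff.fv]
  | pure => simp [Eff.ren, Eff.substC, Eff.fv]
  | join e₁ e₂ ih₁ ih₂ =>
    simp only [Eff.ren, Eff.substC, Eff.fv, Finset.erase_union_distrib] at ih₁ ih₂ ⊢
    rw [ih₁, ih₂]

/- Erasing `b` on both sides makes the identity insensitive to capture of `b` by a binder
of `t`, so it needs no freshness hypothesis. -/
theorem Ty.fv_ren_erase (a b : ℕ) (t : Ty) :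
    (t.ren a b).fv.erase b = (t.fv.erase a).erase b := by
  induction t with
  | tvar c =>
    by_cases hc : c = a
    · subst hc; simp [Ty.ren, Ty.fv]
    · simp [Ty.ren, Ty.fv, hc, Finset.erase_eq_of_notMem (Finset.notMem_singleton.2 (Ne.symm hc))]
  | uvar => simp [Ty.ren, Ty.fv]
  | int => simp [Ty.ren, Ty.fv]
  | arrow t₁ e t₂ ih₁ ih₂ =>
    simp only [Ty.ren, Ty.fv, Finset.erase_union_distrib] at ih₁ ih₂ ⊢
    rw [ih₁, ih₂, Eff.fv_ren_erase]
  | all c k t ih =>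
    by_cases hc : c = a
    · subst hc; simp [Ty.ren, Ty.fv]
    · simp only [Ty.ren, hc, if_false, Ty.fv]
      rw [Finset.erase_right_comm, ih]
      ext; simp only [Finset.mem_erase]; tauto

theorem EffEquiv.fv_eq {e e' : Eff} (h : EffEquiv e e') : e.fv = e'.fv := by
  induction h with
  | refl => rfl
  | symm _ ih => exact ih.symm
  | trans _ _ ih₁ ih₂ => exact ih₁.trans ih₂
  | congr _ _ ih₁ ih₂ => simp [Eff.fv, ih₁, ih₂]
  | assoc => simp [Eff.fv, Finset.union_assoc]
  | comm => simp [Eff.fv, Finset.union_comm]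
  | idem => simp [Eff.fv]
  | pureId => simp [Eff.fv]

theorem TyEquiv.fv_eq {t t' : Ty} (h : TyEquiv t t') : t.fv = t'.fv := by
  induction h with
  | refl => rfl
  | symm _ ih => exact ih.symm
  | trans _ _ ih₁ ih₂ => exact ih₁.trans ih₂
  | arrow _ he _ ih₁ ih₂ => simp [Ty.fv, ih₁, ih₂, he.fv_eq]
  | all _ _ _ ih => simp [Ty.fv, ih]
  | alpha a b _ hfv =>
    rw [Ty.fv, Ty.fv, Ty.fv_ren_erase,
      Finset.erase_eq_of_notMem fun hb => hfv (Finset.mem_of_mem_erase hb)]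

theorem Kinding.lookupKind_ne_none {Γ : Env} {d : Desc} {k : Kind} (h : Kinding Γ d k)
    {a : ℕ} (ha : a ∈ d.fv) : lookupKind Γ a ≠ none := by
  induction h generalizing a with
  | varTy h | varEff h =>
    simp only [Desc.fv, Ty.fv, Eff.fv, Finset.mem_singleton] at ha
    simp [ha, h]
  | int | pure => simp [Desc.fv, Ty.fv, Eff.fv] at ha
  | arrow _ _ _ ih₁ ih₂ ih₃ =>
    simp only [Desc.fv, Ty.fv, Finset.mem_union] at ha ih₁ ih₂ ih₃
    rcases ha with (ha | ha) | ha
    exacts [ih₁ ha, ih₃ ha, ih₂ ha]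
  | join _ _ ih₁ ih₂ =>
    simp only [Desc.fv, Eff.fv, Finset.mem_union] at ha ih₁ ih₂
    exact ha.elim ih₁ ih₂
  | all _ ih =>
    simp only [Desc.fv, Ty.fv, Finset.mem_erase] at ha ih
    simpa [lookupKind, ha.1] using ih ha.2

namespace Typing

variable {Γ : Env} {τ : Ty} {ε : Eff}

theorem inv_var {x : ℕ} (h : Typing Γ (.var x) τ ε) :
    ∃ τ', lookupVar Γ x = some τ' ∧ TyEquiv τ' τ := by
  generalize hE : Expr.var x = E at h
  induction h with
  | var hl => cases hE; exact ⟨_, hl, .refl _⟩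
  | conv _ ht _ ih =>
    obtain ⟨τ', hl, hτ'⟩ := ih hE
    exact ⟨τ', hl, hτ'.trans ht⟩
  | _ => cases hE

theorem inv_app {e₁ e₂ : Expr} (h : Typing Γ (.app e₁ e₂) τ ε) :
    ∃ τ₁ ε' τ₂ ε₁ ε₂, Typing Γ e₁ (.arrow τ₁ ε' τ₂) ε₁ ∧ Typing Γ e₂ τ₁ ε₂ := by
  generalize hE : Expr.app e₁ e₂ = E at h
  induction h with
  | app h₁ h₂ => cases hE; exact ⟨_, _, _, _, _, h₁, h₂⟩
  | conv _ _ _ ih => exact ih hE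
  | _ => cases hE

theorem inv_lam {x : ℕ} {τ₁ : Ty} {e : Expr} (h : Typing Γ (.lam x τ₁ e) τ ε) :
    ∃ τ₂ ε', Typing (Entry.var x τ₁ :: Γ) e τ₂ ε' := by
  generalize hE : Expr.lam x τ₁ e = E at h
  induction h with
  | lam _ hb => cases hE; exact ⟨_, _, hb⟩
  | conv _ _ _ ih => exact ih hE
  | _ => cases hE

theorem inv_lamD {a : ℕ} {k : Kind} {e : Expr} (h : Typing Γ (.lamD a k e) τ ε) :
    ∃ τ', Typing (Entry.kind a k :: Γ) e τ' .pure := by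
  generalize hE : Expr.lamD a k e = E at h
  induction h with
  | lamD hb => cases hE; exact ⟨_, hb⟩
  | conv _ _ _ ih => exact ih hE
  | _ => cases hE

theorem inv_lamU {x : ℕ} {e : Expr} (h : Typing Γ (.lamU x e) τ ε) :
    ∃ τ₁ τ₂ ε', Kinding Γ (.ty τ₁) .type ∧ Typing (Entry.var x τ₁ :: Γ) e τ₂ ε' := by
  generalize hE : Expr.lamU x e = E at h
  induction h with
  | lamU hk _ hb => cases hE; exact ⟨_, _, _, hk, hb⟩
  | conv _ _ _ ih => exact ih hE
  | _ => cases hE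

theorem fv_subset_of_app_var {f x : ℕ} {τf τx : Ty} (hf : lookupVar Γ f = some τf)
    (hx : lookupVar Γ x = some τx) (h : Typing Γ (.app (.var f) (.var x)) τ ε) :
    τx.fv ⊆ τf.fv := by
  obtain ⟨τ₁, ε', τ₂, _, _, hfun, harg⟩ := h.inv_app
  obtain ⟨τf', hf', hτf⟩ := hfun.inv_var
  obtain ⟨τx', hx', hτx⟩ := harg.inv_var
  rw [hf] at hf'
  rw [hx] at hx'
  cases hf'
  cases hx'
  rw [hτx.fv_eq, hτf.fv_eq, Ty.fv]
  exact Finset.subset_union_left.trans Finset.subset_union_left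

end Typing

/-- λ̂f. Λα:type. λx:α. f x is not typable in the declarative type
system when the initial environment does not bind α. (Term variables: f = 0,
x = 1; type variable: α = 0.) -/
theorem escape_not_typable (Γ : Env) (τ : Ty) (ε : Eff)
    (hΓ : lookupKind Γ 0 = none) :
    ¬ Typing Γ
        (.lamU 0 (.lamD 0 .type (.lam 1 (.tvar 0) (.app (.var 0) (.var 1)))))
        τ ε := by
  intro h
  obtain ⟨τf, _, _, hτf, hbody⟩ := h.inv_lamU
  obtain ⟨_, hlam⟩ := hbody.inv_lamD
  obtain ⟨_, _, happ⟩ := hlam.inv_lam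
  have hα : (0 : ℕ) ∈ τf.fv :=
    Typing.fv_subset_of_app_var rfl rfl happ (by simp [Ty.fv])
  exact hτf.lookupKind_ne_none hα hΓ
end

section
/- The expression (λ̂x. Λα:type. x) 42 is typable in the declarative type system extended with an integer base type: in the empty environment it has type ∀α:type. Int and some pure effect, but the Jouvelot–Gifford inference algorithm fails on it, because the application case unifies the function type ŷ →∅ ∀α:type.ŷ with Int →x̂ₑ x̂ₜ, and the fresh unification variable x̂ₜ cannot be unified with the polymorphic type ∀α:type.ŷ (unification variables stand only for monomorphic types). -/

lemma mono_applyS {θ : Subst} (hθ : ∀ x t, θ x = some (.ty t) → Mono t)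
    {τ : Ty} (h : Mono τ) : Mono (τ.applyS θ) := by
  induction h with
  | tvar a => exact .tvar a
  | uvar x =>
    simp only [Ty.applyS]
    cases hx : θ x with
    | none => exact .uvar x
    | some d =>
      cases d with
      | ty t => exact hθ x t hx
      | eff e => exact .uvar x
  | int => exact .int
  | arrow e _ _ ih1 ih2 => exact .arrow _ ih1 ih2

lemma unify_mono {t1 t2 θ C} (h : Unify t1 t2 θ C) :
    ∀ x t, θ x = some (.ty t) → Mono t := by
  induction h with
  | tvar a => intro x t hx; simp [idSubst] at hx
  | int => intro x t hx; simp [idSubst] at hx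
  | uvarRefl x => intro x t hx; simp [idSubst] at hx
  | uvarL h1 h2 =>
    intro y t hy
    unfold Subst.single at hy
    split at hy
    · cases hy; assumption
    · cases hy
  | uvarR h1 h2 =>
    intro y t hy
    unfold Subst.single at hy
    split at hy
    · cases hy; assumption
    · cases hy
  | arrow h1 h2 ih1 ih2 =>
    intro x t hx
    unfold Subst.comp at hx
    split at hx
    · next d h1x =>
        cases d with
        | ty t' =>
          simp only [Desc.applyS, Option.some.injEq] at hx
          cases hx
          exact mono_applyS ih2 (ih1 x t' h1x)
        | eff e => simp [Desc.applyS] at hx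
    · exact ih2 x t hx
  | all _ _ _ _ ih => exact ih

lemma not_unify_all {a k t t2 θ C} (h2 : Mono t2) :
    ¬ Unify (.all a k t) t2 θ C := by
  intro h
  cases h with
  | uvarR h1 hm => cases hm
  | all _ _ _ _ => cases h2

/-- (λ̂x. Λα:type. x) 42 is declaratively typable with type
∀α:type. Int and pure effect, but the inference algorithm fails on it, since
the application case would have to unify a fresh unification variable with the
polymorphic type ∀α:type.ŷ. (Term variable x = 0, type variable α = 0.) -/
theorem rInfer_incomplete_poly_result :
    Typing [] (.app (.lamU 0 (.lamD 0 .type (.var 0))) (.lit 42))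
      (.all 0 .type .int) .pure ∧
    ¬ ∃ (τ : Ty) (ε : Eff) (θ : Subst) (C : List (Eff × Eff)),
        RInfer [] (.app (.lamU 0 (.lamD 0 .type (.var 0))) (.lit 42)) τ ε θ C := by
  constructor
  · have hbody : Typing [Entry.var 0 Ty.int] (.lamD 0 .type (.var 0))
        (.all 0 .type .int) .pure :=
      Typing.lamD (Typing.var (by simp [lookupVar]))
    have hfun : Typing [] (.lamU 0 (.lamD 0 .type (.var 0)))
        (.arrow .int .pure (.all 0 .type .int)) .pure :=
      Typing.lamU Kinding.int Mono.int hbody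
    have happ := Typing.app hfun (Typing.lit (n := 42))
    exact Typing.conv happ (TyEquiv.refl _)
      (EffEquiv.trans (EffEquiv.pureId _) (EffEquiv.pureId _))
  · rintro ⟨τ, ε, θ, C, h⟩
    cases h with
    | app h1 h2 hne hxt hxe hu =>
      rename_i xt xe
      cases h1 with
      | lamU hz h1' =>
        cases h1' with
        | lamD h1'' hCeq hb hf hinj hg =>
          simp only [Ty.applyS] at hu
          cases hu with
          | arrow hu1 hu2 =>
            rename_i θa θb Ca Cb
            simp only [Ty.applyS] at hu2
            have hmono : Mono (Ty.applyS θa (.uvar xt)) := by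
              simp only [Ty.applyS]
              cases hx : θa xt with
              | none => exact .uvar xt
              | some d =>
                cases d with
                | ty t => exact unify_mono hu1 xt t hx
                | eff e => exact .uvar xt
            exact not_unify_all hmono hu2
end

section
/- The expression (Λα:type. λ̂x. x)⟨∀β:type. β →∅ β⟩ (Λγ:type. λ̂y. y) is typable in the declarative type system (with result type ∀γ:type. γ →∅ γ up to equivalence), but the Jouvelot–Gifford inference algorithm fails on it: the algorithm infers ∀α:type. x̂ →∅ x̂ for the first abstraction, the type application substitutes [α ↦ ∀β:type.β→∅β] which leaves the body x̂ →∅ x̂ unchanged, and subsequent unification of x̂ with the polymorphic type ∀γ:type.γ→∅γ fails since unification variables may only be instantiated to monomorphic types. -/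
/-- (Λα:type. λ̂x. x)⟨∀β:type. β →∅ β⟩ (Λγ:type. λ̂y. y) is
declaratively typable with result type equivalent to ∀γ:type. γ →∅ γ, but the
inference algorithm fails on it: the capturing substitution of the type
application leaves the inferred body x̂ →∅ x̂ unchanged, and the subsequent
unification of x̂ with the polymorphic argument type fails.
(Type variables: α = 0, γ = 1, β = 2; term variables x = y = 0.) -/
theorem rInfer_incomplete_subst_before_inst :
    (∃ (τ : Ty) (ε : Eff),
      Typing []
        (.app (.appD (.lamD 0 .type (.lamU 0 (.var 0)))
                (.ty (.all 2 .type (.arrow (.tvar 2) .pure (.tvar 2)))))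
              (.lamD 1 .type (.lamU 0 (.var 0))))
        τ ε ∧
      TyEquiv τ (.all 1 .type (.arrow (.tvar 1) .pure (.tvar 1)))) ∧
    ¬ ∃ (τ : Ty) (ε : Eff) (θ : Subst) (C : List (Eff × Eff)),
        RInfer []
          (.app (.appD (.lamD 0 .type (.lamU 0 (.var 0)))
                  (.ty (.all 2 .type (.arrow (.tvar 2) .pure (.tvar 2)))))
                (.lamD 1 .type (.lamU 0 (.var 0))))
          τ ε θ C := by
  constructor
  · refine ⟨.all 2 .type (.arrow (.tvar 2) .pure (.tvar 2)),
      .join .pure (.join .pure .pure), ?_, ?_⟩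
    · apply Typing.app (τ₂ := .all 2 .type (.arrow (.tvar 2) .pure (.tvar 2)))
        (ε := .pure)
      · have h := Typing.appD (Γ := ([] : Env)) (a := 0) (k := .type)
          (τ := .arrow (.tvar 0) .pure (.tvar 0))
          (τ' := .arrow (.all 2 .type (.arrow (.tvar 2) .pure (.tvar 2))) .pure
                 (.all 2 .type (.arrow (.tvar 2) .pure (.tvar 2))))
          (δ := .ty (.all 2 .type (.arrow (.tvar 2) .pure (.tvar 2))))
          (ε := .pure)
          (Typing.lamD (Typing.lamU (x:=0) (Kinding.varTy (a:=0) rfl) (Mono.tvar 0) (Typing.var (x:=0) rfl)))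
          (Kinding.all (Kinding.arrow (.varTy (a:=2) rfl) (.varTy (a:=2) rfl) .pure))
          (SubstCA.arrow SubstCA.tvar_eq SubstCA.tvar_eq)
        exact h
      · exact Typing.conv
          (Typing.lamD (Typing.lamU (x:=0) (Kinding.varTy (a:=1) rfl) (Mono.tvar 1) (Typing.var (x:=0) rfl)))
          (TyEquiv.alpha 1 2 .type (by decide) (by decide)) (EffEquiv.refl _)
    · exact TyEquiv.alpha 2 1 .type (by decide) (by decide)
  · rintro ⟨τ, ε, θ, C, h⟩
    cases h with
    | app h1 h2 hne hxt hxe hu =>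
      cases h1 with
      | appD h1' hk =>
        cases h1' with
        | lamD h1'' =>
          cases h1'' with
          | lamU hz h1''' =>
            cases h1'''
            cases h2 with
            | lamD h2' =>
              cases h2' with
              | lamU hw h2'' =>
                cases h2''
                simp only [Ty.substC, Ty.applyS, idSubst, Eff.substC, Eff.applyS] at hu
                cases hu with
                | arrow hu1 hu2 =>
                  cases hu1 with
                  | uvarL h hm => cases hm
end

section
/- If unify(τ₁, τ₂) = (θ, C) succeeds for the arrow and variable cases restricted to monomorphic input types (no ∀ occurs in τ₁ or τ₂), and μ is any model of C, then μ(θ(τ₁)) ≡ μ(θ(τ₂)); i.e., the Jouvelot–Gifford unification correctness theorem does hold on the ∀-free fragment. -/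
section UnifyAux

/-- A substitution is good if it maps unification variables only to
monomorphic types. -/
def GoodS (θ : Subst) : Prop :=
  ∀ x, θ x = none ∨ ∃ t, θ x = some (.ty t) ∧ Mono t

lemma goodS_id : GoodS idSubst := fun _ => Or.inl rfl

lemma goodS_single {x : ℕ} {τ : Ty} (hm : Mono τ) : GoodS (Subst.single x (.ty τ)) := by
  intro y
  by_cases h : y = x
  · exact Or.inr ⟨τ, by simp [Subst.single, h], hm⟩
  · exact Or.inl (by simp [Subst.single, h])

lemma eff_applyS_good {θ : Subst} (h : GoodS θ) (e : Eff) : e.applyS θ = e := by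
  induction e with
  | tvar a => rfl
  | uvar x => rcases h x with h | ⟨t, h, _⟩ <;> simp [Eff.applyS, h]
  | pure => rfl
  | join e₁ e₂ ih₁ ih₂ => simp [Eff.applyS, ih₁, ih₂]

lemma mono_applyS_s14 {θ : Subst} (h : GoodS θ) {t : Ty} (hm : Mono t) :
    Mono (t.applyS θ) := by
  induction hm with
  | tvar a => exact Mono.tvar a
  | uvar x =>
    rcases h x with h | ⟨t, h, hm⟩
    · simpa [Ty.applyS, h] using Mono.uvar x
    · simpa [Ty.applyS, h] using hm
  | int => exact Mono.int
  | arrow e _ _ ih₁ ih₂ => exact Mono.arrow _ ih₁ ih₂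

lemma goodS_comp {θ₁ θ₂ : Subst} (h₁ : GoodS θ₁) (h₂ : GoodS θ₂) :
    GoodS (θ₂.comp θ₁) := by
  intro x
  rcases h₁ x with h | ⟨t, h, hm⟩
  · rcases h₂ x with h' | ⟨t, h', hm⟩
    · exact Or.inl (by simp [Subst.comp, h, h'])
    · exact Or.inr ⟨t, by simp [Subst.comp, h, h'], hm⟩
  · exact Or.inr ⟨t.applyS θ₂, by simp [Subst.comp, h, Desc.applyS],
      mono_applyS_s14 h₂ hm⟩

lemma mono_noForall {t : Ty} (hm : Mono t) : noForall t := by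
  induction hm with
  | arrow e _ _ ih₁ ih₂ => exact ⟨ih₁, ih₂⟩
  | _ => trivial

lemma noForall_applyS {θ : Subst} (h : GoodS θ) :
    ∀ {t : Ty}, noForall t → noForall (t.applyS θ)
  | .tvar _, _ => trivial
  | .int, _ => trivial
  | .uvar x, _ => by
    rcases h x with h | ⟨t, h, hm⟩
    · simp [Ty.applyS, h, noForall]
    · simpa [Ty.applyS, h] using mono_noForall hm
  | .arrow t₁ e t₂, hn => ⟨noForall_applyS h hn.1, noForall_applyS h hn.2⟩
  | .all _ _ _, hn => hn.elim

lemma comp_ty {θ₁ θ₂ : Subst} (h₁ : GoodS θ₁) (h₂ : GoodS θ₂) (t : Ty) :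
    Ty.applyS (θ₂.comp θ₁) t = Ty.applyS θ₂ (Ty.applyS θ₁ t) := by
  induction t with
  | tvar a => rfl
  | uvar x =>
    rcases h₁ x with h | ⟨t, h, _⟩
    · simp [Ty.applyS, Subst.comp, h]
    · simp [Ty.applyS, Subst.comp, h, Desc.applyS]
  | int => rfl
  | arrow t₁ e t₂ ih₁ ih₂ =>
    simp [Ty.applyS, ih₁, ih₂, eff_applyS_good (goodS_comp h₁ h₂),
      eff_applyS_good h₁, eff_applyS_good h₂]
  | all a k t ih => simp [Ty.applyS, ih]

lemma single_eff {x : ℕ} {d : Desc} {e : Eff} (h : x ∉ e.fuv) :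
    e.applyS (Subst.single x d) = e := by
  induction e with
  | tvar a => rfl
  | uvar y =>
    have : y ≠ x := by simp [Eff.fuv] at h; exact fun e => h e.symm
    simp [Eff.applyS, Subst.single, this]
  | pure => rfl
  | join e₁ e₂ ih₁ ih₂ =>
    simp [Eff.fuv] at h
    simp [Eff.applyS, ih₁ h.1, ih₂ h.2]

lemma single_ty {x : ℕ} {d : Desc} {t : Ty} (h : x ∉ t.fuv) :
    t.applyS (Subst.single x d) = t := by
  induction t with
  | tvar a => rfl
  | uvar y =>
    have : y ≠ x := by simp [Ty.fuv] at h; exact fun e => h e.symm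
    simp [Ty.applyS, Subst.single, this]
  | int => rfl
  | arrow t₁ e t₂ ih₁ ih₂ =>
    simp [Ty.fuv] at h
    simp [Ty.applyS, ih₁ h.1, single_eff h.2.1, ih₂ h.2.2]
  | all a k t ih =>
    simp [Ty.fuv] at h
    simp [Ty.applyS, ih h]

lemma id_ty (t : Ty) : Ty.applyS idSubst t = t := by
  induction t with
  | tvar a => rfl
  | uvar x => rfl
  | int => rfl
  | arrow t₁ e t₂ ih₁ ih₂ =>
    simp [Ty.applyS, ih₁, ih₂, eff_applyS_good goodS_id]
  | all a k t ih => simp [Ty.applyS, ih]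

lemma unify_good {τ₁ τ₂ : Ty} {θ : Subst} {C : List (Eff × Eff)}
    (hu : Unify τ₁ τ₂ θ C) : GoodS θ := by
  induction hu with
  | tvar a => exact goodS_id
  | int => exact goodS_id
  | uvarRefl x => exact goodS_id
  | uvarL _ hm => exact goodS_single hm
  | uvarR _ hm => exact goodS_single hm
  | arrow _ _ ih₁ ih₂ => exact goodS_comp ih₁ ih₂
  | all _ _ _ _ ih => exact ih

lemma unify_aux {μ : EModel} {τ₁ τ₂ : Ty} {θ : Subst} {C : List (Eff × Eff)}
    (hu : Unify τ₁ τ₂ θ C) :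
    noForall τ₁ → noForall τ₂ → Models μ C → ∀ σ : Subst, GoodS σ →
    TyEquiv (Ty.applyM μ (Ty.applyS σ (Ty.applyS θ τ₁)))
      (Ty.applyM μ (Ty.applyS σ (Ty.applyS θ τ₂))) := by
  induction hu with
  | tvar a => exact fun _ _ _ _ _ => TyEquiv.refl _
  | int => exact fun _ _ _ _ _ => TyEquiv.refl _
  | uvarRefl x => exact fun _ _ _ _ _ => TyEquiv.refl _
  | @uvarL x τ hx hm =>
    intro _ _ _ σ _
    have h1 : Ty.applyS (Subst.single x (.ty τ)) (.uvar x) = τ := by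
      simp [Ty.applyS, Subst.single]
    rw [h1, single_ty hx]
    exact TyEquiv.refl _
  | @uvarR x τ hx hm =>
    intro _ _ _ σ _
    have h1 : Ty.applyS (Subst.single x (.ty τ)) (.uvar x) = τ := by
      simp [Ty.applyS, Subst.single]
    rw [h1, single_ty hx]
    exact TyEquiv.refl _
  | @arrow t₁ t₂ t₁' t₂' e₁ e₂ θ₁ θ₂ C₁ C₂ hu₁ hu₂ ih₁ ih₂ =>
    intro hn₁ hn₂ hC σ hσ
    obtain ⟨hn₁a, hn₁b⟩ := hn₁
    obtain ⟨hn₂a, hn₂b⟩ := hn₂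
    have g₁ := unify_good hu₁
    have g₂ := unify_good hu₂
    have hC₁ : Models μ C₁ := fun p hp => hC p (by simp [hp])
    have hC₂ : Models μ C₂ := fun p hp => hC p (by simp [hp])
    have he : EffEquiv (Eff.applyM μ e₁) (Eff.applyM μ e₂) :=
      hC (e₁, e₂) (by simp)
    simp only [Ty.applyS, Ty.applyM]
    refine TyEquiv.arrow ?_ ?_ ?_
    · have h := ih₁ hn₁a hn₂a hC₁ (σ.comp θ₂) (goodS_comp g₂ hσ)
      rwa [comp_ty g₂ hσ, comp_ty g₂ hσ, ← comp_ty g₁ g₂, ← comp_ty g₁ g₂] at h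
    · rw [eff_applyS_good (goodS_comp g₁ g₂), eff_applyS_good (goodS_comp g₁ g₂),
        eff_applyS_good hσ, eff_applyS_good hσ]
      exact he
    · have h := ih₂ (noForall_applyS g₁ hn₁b) (noForall_applyS g₁ hn₂b) hC₂ σ hσ
      rwa [← comp_ty g₁ g₂, ← comp_ty g₁ g₂] at h
  | all _ _ _ _ _ =>
    intro hn₁ _ _ _ _
    exact hn₁.elim

end UnifyAux

/-- The unification correctness theorem does hold on the ∀-free
fragment: if unify(τ₁, τ₂) = (θ, C) for ∀-free τ₁, τ₂ and μ is a model of C,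
then μ(θ(τ₁)) ≡ μ(θ(τ₂)). -/
theorem unify_correct_noForall (τ₁ τ₂ : Ty) (θ : Subst) (C : List (Eff × Eff))
    (μ : EModel)
    (h₁ : noForall τ₁) (h₂ : noForall τ₂)
    (hu : Unify τ₁ τ₂ θ C)
    (hμ : IsModel μ) (hC : Models μ C) :
    TyEquiv (Ty.applyM μ (Ty.applyS θ τ₁)) (Ty.applyM μ (Ty.applyS θ τ₂)) := by
  have h := unify_aux hu h₁ h₂ hC idSubst goodS_id
  rwa [id_ty, id_ty] at h
end
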